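/- For every γ₀ > 0, with λ := √2 · γ₀ e^{-2γ₀} √(1 - 4γ₀ e^{-4γ₀}), the inequality tanh(√(γ₀² + λ²)) < √(γ₀² + λ²)/(γ₀ + λ) holds. -/

import Mathlib

/-!
With `s = √(a² + b²)` one has `(a + b)² - s² = 2ab`, so `tanh s < s / (a + b)` is equivalent to
`2ab · e^{2s} < (a + b + s)²`, which holds as soon as `b · e^{2s} < 2a`, since `s ≥ a`.
For `b = λ` we have `λ² ≤ 2γ₀² e^{-4γ₀}`, hence `s ≤ γ₀ (1 + e^{-4γ₀})` and
`λ² e^{4s} ≤ 2γ₀² exp (4γ₀ e^{-4γ₀}) < 4γ₀²`, because `x e^{-x} ≤ e⁻¹ < log 2`.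
-/

open Real

lemma exp_neg_one_lt_log_two : exp (-1) < log 2 := by
  rw [exp_neg, inv_lt_iff_one_lt_mul₀ (exp_pos 1)]
  nlinarith [exp_one_gt_d9, log_two_gt_d9]

lemma tanh_sqrt_lt_of_mul_exp_lt {a b : ℝ} (ha : 0 < a) (hb : 0 ≤ b)
    (h : b * exp (2 * √(a ^ 2 + b ^ 2)) < 2 * a) :
    tanh √(a ^ 2 + b ^ 2) < √(a ^ 2 + b ^ 2) / (a + b) := by
  set s := √(a ^ 2 + b ^ 2)
  have hs_sq : s ^ 2 = a ^ 2 + b ^ 2 := sq_sqrt (by positivity)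
  have has : a ≤ s := le_sqrt_of_sq_le (by nlinarith)
  have hE : exp (2 * s) = exp s * exp s := by rw [← exp_add]; ring_nf
  have hinv : exp s * exp (-s) = 1 := by rw [← exp_add]; simp
  rw [tanh_eq, div_lt_div_iff₀ (by positivity) (by positivity)]
  nlinarith [exp_pos s, exp_pos (-s), mul_pos ha ha]

lemma mul_exp_two_mul_sqrt_lt {γ l : ℝ} (hγ : 0 < γ)
    (hl_sq : l ^ 2 ≤ 2 * γ ^ 2 * exp (-(4 * γ))) :
    l * exp (2 * √(γ ^ 2 + l ^ 2)) < 2 * γ := by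
  set s := √(γ ^ 2 + l ^ 2)
  have hs : s ≤ γ + γ * exp (-(4 * γ)) :=
    (sqrt_le_left (by positivity)).2 (by nlinarith [sq_nonneg (γ * exp (-(4 * γ)))])
  have hexp : exp (4 * γ * exp (-(4 * γ))) < 2 := by
    rw [← exp_log two_pos, exp_lt_exp]
    exact (mul_exp_neg_le_exp_neg_one _).trans_lt exp_neg_one_lt_log_two
  have hexp_s : exp (4 * s) < 2 * exp (4 * γ) := by
    calc exp (4 * s) ≤ exp (4 * γ) * exp (4 * γ * exp (-(4 * γ))) := by
          rw [← exp_add]; gcongr; linarith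
      _ < exp (4 * γ) * 2 := by gcongr
      _ = 2 * exp (4 * γ) := mul_comm _ _
  refine lt_of_pow_lt_pow_left₀ 2 (by positivity) ?_
  calc (l * exp (2 * s)) ^ 2 = l ^ 2 * exp (4 * s) := by rw [mul_pow, ← exp_nat_mul]; ring_nf
    _ ≤ 2 * γ ^ 2 * exp (-(4 * γ)) * exp (4 * s) := by gcongr
    _ < 2 * γ ^ 2 * exp (-(4 * γ)) * (2 * exp (4 * γ)) := by gcongr
    _ = (2 * γ) ^ 2 := by rw [exp_neg]; field_simp

theorem lambda0_admissible (γ₀ : ℝ) (hγ : 0 < γ₀) :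
    Real.tanh (Real.sqrt (γ₀ ^ 2 +
        (Real.sqrt 2 * γ₀ * Real.exp (-(2 * γ₀)) *
          Real.sqrt (1 - 4 * γ₀ * Real.exp (-(4 * γ₀)))) ^ 2)) <
      Real.sqrt (γ₀ ^ 2 +
        (Real.sqrt 2 * γ₀ * Real.exp (-(2 * γ₀)) *
          Real.sqrt (1 - 4 * γ₀ * Real.exp (-(4 * γ₀)))) ^ 2) /
      (γ₀ + Real.sqrt 2 * γ₀ * Real.exp (-(2 * γ₀)) *
          Real.sqrt (1 - 4 * γ₀ * Real.exp (-(4 * γ₀)))) := by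
  set c := 1 - 4 * γ₀ * exp (-(4 * γ₀))
  set l := √2 * γ₀ * exp (-(2 * γ₀)) * √c
  have hl : 0 ≤ l := by positivity
  have hl_sq : l ^ 2 ≤ 2 * γ₀ ^ 2 * exp (-(4 * γ₀)) := by
    have hc : √c ^ 2 ≤ 1 := by
      rw [sq_le_one_iff₀ (sqrt_nonneg c), sqrt_le_one]
      linarith [show 0 ≤ 4 * γ₀ * exp (-(4 * γ₀)) by positivity]
    calc l ^ 2 = 2 * γ₀ ^ 2 * exp (-(4 * γ₀)) * √c ^ 2 := by
          rw [mul_pow, mul_pow, mul_pow, sq_sqrt zero_le_two, ← exp_nat_mul]; ring_nf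
      _ ≤ 2 * γ₀ ^ 2 * exp (-(4 * γ₀)) * 1 := by gcongr
      _ = 2 * γ₀ ^ 2 * exp (-(4 * γ₀)) := mul_one _
  exact tanh_sqrt_lt_of_mul_exp_lt hγ hl (mul_exp_two_mul_sqrt_lt hγ hl_sq)
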